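/- For every k ≥ 1 and 0 ≤ x < y, Λ_k[a(M), b(M); M] → (y^{2k} - x^{2k})/((2k)(2k)!) as M → ∞, whenever a(M)/M → x and b(M)/M → y with a(M) ≤ b(M), where Λ_k[a,b;M] := ∑_{m=a}^{b-1} (1/(2k)) (1/(2M²))^k ∑_{m_1+⋯+m_k = m} ∏_{i=1}^k (2m_i + 1). -/

import Mathlib

open Filter

/-- `Λ_k(m; M) = (1/(2k)) (1/(2M²))^k ∑_{m₁+⋯+m_k = m} ∏ (2mᵢ+1)`. -/
noncomputable def LambdaK (k m M : ℕ) : ℝ :=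
  (1 / (2 * k : ℝ)) * (1 / (2 * (M : ℝ) ^ 2)) ^ k *
    ∑ t ∈ Finset.Nat.antidiagonalTuple k m, ∏ i, (2 * (t i : ℝ) + 1)

/-- `Λ_k[a, b; M] = ∑_{m=a}^{b-1} Λ_k(m; M)`. -/
noncomputable def LambdaKInterval (k a b M : ℕ) : ℝ :=
  ∑ m ∈ Finset.Ico a b, LambdaK k m M


def Pcomb (k m : ℕ) : ℕ := ∑ t ∈ Finset.Nat.antidiagonalTuple k m, ∏ i, (2 * t i + 1)

def Tcomb (k n : ℕ) : ℕ := ∑ m ∈ Finset.range n, Pcomb k m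

lemma Pcomb_one (m : ℕ) : Pcomb 1 m = 2 * m + 1 := by
  simp [Pcomb, Finset.Nat.antidiagonalTuple_one]

lemma Tcomb_one (n : ℕ) : Tcomb 1 n = n ^ 2 := by
  induction n with
  | zero => simp [Tcomb]
  | succ n ih =>
    rw [Tcomb, Finset.sum_range_succ, ← Tcomb, ih, Pcomb_one]; ring

lemma Pcomb_succ (k m : ℕ) :
    Pcomb (k + 1) m = ∑ p ∈ Finset.HasAntidiagonal.antidiagonal m, (2 * p.1 + 1) * Pcomb k p.2 := by
  have hrw : ∀ p ∈ Finset.HasAntidiagonal.antidiagonal m, (2 * p.1 + 1) * Pcomb k p.2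
      = ∑ t ∈ Finset.Nat.antidiagonalTuple k p.2,
          ∏ i : Fin (k + 1), (2 * (Fin.cons p.1 t : Fin (k+1) → ℕ) i + 1) := by
    intro p _
    rw [Pcomb, Finset.mul_sum]
    refine Finset.sum_congr rfl fun t _ => ?_
    rw [Fin.prod_univ_succ]
    simp
  rw [Finset.sum_congr rfl hrw, Finset.sum_sigma']
  simp only [Pcomb]
  refine (Finset.sum_nbij' (fun (t : Fin (k+1) → ℕ) => (⟨(t 0, ∑ i : Fin k, t i.succ), Fin.tail t⟩ :
      Σ _p : ℕ × ℕ, (Fin k → ℕ))) (fun x => Fin.cons x.1.1 x.2) ?_ ?_ ?_ ?_ ?_)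
  · intro t ht
    rw [Finset.Nat.mem_antidiagonalTuple] at ht
    refine Finset.mem_sigma.2 ⟨?_, ?_⟩
    · rw [Finset.HasAntidiagonal.mem_antidiagonal]
      rw [← ht, Fin.sum_univ_succ]
    · rw [Finset.Nat.mem_antidiagonalTuple]
      rfl
  · intro x hx
    rw [Finset.mem_sigma, Finset.HasAntidiagonal.mem_antidiagonal, Finset.Nat.mem_antidiagonalTuple] at hx
    rw [Finset.Nat.mem_antidiagonalTuple, Fin.sum_cons, hx.2, hx.1]
  · intro t _
    simp [Fin.cons_self_tail]
  · intro x hx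
    rw [Finset.mem_sigma, Finset.HasAntidiagonal.mem_antidiagonal, Finset.Nat.mem_antidiagonalTuple] at hx
    ext
    · simp
    · simp only [Fin.cons_succ]
      exact hx.2
    · simp [Fin.tail]
  · intro t _
    rw [show ((fun (t : Fin (k+1) → ℕ) => (⟨(t 0, ∑ i : Fin k, t i.succ), Fin.tail t⟩ :
      Σ _p : ℕ × ℕ, (Fin k → ℕ))) t).snd = Fin.tail t from rfl]
    rw [show ((fun (t : Fin (k+1) → ℕ) => (⟨(t 0, ∑ i : Fin k, t i.succ), Fin.tail t⟩ :
      Σ _p : ℕ × ℕ, (Fin k → ℕ))) t).fst.fst = t 0 from rfl]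
    rw [Fin.cons_self_tail]

lemma Pcomb_succ' (k m : ℕ) :
    Pcomb (k + 1) m = ∑ j ∈ Finset.range (m + 1), (2 * j + 1) * Pcomb k (m - j) := by
  rw [Pcomb_succ, Finset.Nat.sum_antidiagonal_eq_sum_range_succ_mk]

lemma Tcomb_succ (k n : ℕ) :
    Tcomb (k + 1) n = ∑ j ∈ Finset.range n, (2 * j + 1) * Tcomb k (n - j) := by
  induction n with
  | zero => simp [Tcomb]
  | succ n ih =>
    rw [Tcomb, Finset.sum_range_succ, ← Tcomb, ih, Pcomb_succ']
    rw [Finset.sum_range_succ (fun j => (2 * j + 1) * Tcomb k (n + 1 - j))]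
    have h1 : ∀ j ∈ Finset.range n, (2 * j + 1) * Tcomb k (n + 1 - j)
        = (2 * j + 1) * Tcomb k (n - j) + (2 * j + 1) * Pcomb k (n - j) := by
      intro j hj
      rw [Finset.mem_range] at hj
      have : n + 1 - j = (n - j) + 1 := by omega
      rw [this, Tcomb, Finset.sum_range_succ, ← Tcomb, Nat.mul_add]
    rw [Finset.sum_congr rfl h1, Finset.sum_add_distrib]
    have hn1 : n + 1 - n = 1 := by omega
    rw [hn1]
    have hT1 : Tcomb k 1 = Pcomb k 0 := by simp [Tcomb]
    rw [hT1]
    have h2 : ∑ j ∈ Finset.range (n + 1), (2 * j + 1) * Pcomb k (n - j)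
        = (∑ j ∈ Finset.range n, (2 * j + 1) * Pcomb k (n - j))
          + (2 * n + 1) * Pcomb k (n - n) := Finset.sum_range_succ _ _
    simp only [Nat.sub_self] at h2
    omega

lemma sum_choose_lower (d n : ℕ) : ∑ l ∈ Finset.range n, Nat.choose l d = Nat.choose n (d + 1) := by
  induction n with
  | zero => simp
  | succ n ih =>
    rw [Finset.sum_range_succ, ih, Nat.choose_succ_succ]
    simp only [Nat.succ_eq_add_one]
    omega

lemma sum_choose_upper (d n : ℕ) :
    ∑ l ∈ Finset.range n, Nat.choose (l + d) d = Nat.choose (n + d) (d + 1) := by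
  induction n with
  | zero => simp
  | succ n ih =>
    rw [Finset.sum_range_succ, ih]
    have : n + 1 + d = (n + d) + 1 := by omega
    rw [this, Nat.choose_succ_succ]
    simp only [Nat.succ_eq_add_one]
    omega

lemma identA (d n : ℕ) :
    ∑ l ∈ Finset.range n, (n - l) * Nat.choose (l + d) d = Nat.choose (n + d + 1) (d + 2) := by
  induction n with
  | zero => simp [Nat.choose_eq_zero_of_lt (by omega : d + 1 < d + 2)]
  | succ n ih =>
    have h1 : ∀ l ∈ Finset.range (n + 1), (n + 1 - l) * Nat.choose (l + d) d
        = (n - l) * Nat.choose (l + d) d + Nat.choose (l + d) d := by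
      intro l hl
      rw [Finset.mem_range] at hl
      have : n + 1 - l = (n - l) + 1 := by omega
      rw [this]; ring
    rw [Finset.sum_congr rfl h1, Finset.sum_add_distrib, sum_choose_upper,
      Finset.sum_range_succ, Nat.sub_self, Nat.zero_mul, Nat.add_zero, ih]
    have h2 : n + 1 + d + 1 = n + d + 2 := by omega
    have h3 : n + 1 + d = (n + d + 1) := by omega
    rw [h2, h3]
    have hp : Nat.choose (n + d + 2) (d + 2)
        = Nat.choose (n + d + 1) (d + 1) + Nat.choose (n + d + 1) (d + 2) :=
      Nat.choose_succ_succ _ _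
    omega

lemma identB (d n : ℕ) (hd : 1 ≤ d) :
    ∑ l ∈ Finset.range n, (n - 1 - l) * Nat.choose (l + 1) d = Nat.choose (n + 1) (d + 2) := by
  induction n with
  | zero => simp [Nat.choose_eq_zero_of_lt (by omega : 1 < d + 2)]
  | succ n ih =>
    rw [Finset.sum_range_succ]
    have hz : (n + 1 - 1 - n) * Nat.choose (n + 1) d = 0 := by
      have : n + 1 - 1 - n = 0 := by omega
      rw [this, Nat.zero_mul]
    rw [hz, Nat.add_zero]
    have h1 : ∀ l ∈ Finset.range n, (n + 1 - 1 - l) * Nat.choose (l + 1) d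
        = (n - 1 - l) * Nat.choose (l + 1) d + Nat.choose (l + 1) d := by
      intro l hl
      rw [Finset.mem_range] at hl
      have : n + 1 - 1 - l = (n - 1 - l) + 1 := by omega
      rw [this]; ring
    rw [Finset.sum_congr rfl h1, Finset.sum_add_distrib, ih]
    have h2 : ∑ l ∈ Finset.range n, Nat.choose (l + 1) d = Nat.choose (n + 1) (d + 1) := by
      have := sum_choose_lower d (n + 1)
      rw [Finset.sum_range_succ' (fun l => Nat.choose l d) n] at this
      have h0 : Nat.choose 0 d = 0 := Nat.choose_eq_zero_of_lt (by omega)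
      omega
    rw [h2]
    have h4 : n + 1 + 1 = n + 2 := by omega
    rw [h4]
    have hp : Nat.choose (n + 2) (d + 2)
        = Nat.choose (n + 1) (d + 1) + Nat.choose (n + 1) (d + 2) :=
      Nat.choose_succ_succ _ _
    omega

lemma Tcomb_sandwich (k : ℕ) (hk : 1 ≤ k) (n : ℕ) :
    2 ^ k * Nat.choose n (2 * k) ≤ Tcomb k n ∧
      Tcomb k n ≤ 2 ^ k * Nat.choose (n + (2 * k - 1)) (2 * k) := by
  induction k, hk using Nat.le_induction generalizing n with
  | base =>
    simp only [pow_one, mul_one]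
    rw [Tcomb_one]
    have hd : Nat.descFactorial n 2 = 2 * Nat.choose n 2 := by
      rw [Nat.descFactorial_eq_factorial_mul_choose]; norm_num [Nat.factorial]
    have hd' : Nat.descFactorial (n + 1) 2 = 2 * Nat.choose (n + 1) 2 := by
      rw [Nat.descFactorial_eq_factorial_mul_choose]; norm_num [Nat.factorial]
    have e1 : Nat.descFactorial n 2 = (n - 1) * n := by
      simp [Nat.descFactorial]
    have e2 : Nat.descFactorial (n + 1) 2 = n * (n + 1) := by
      simp [Nat.descFactorial]
    constructor
    · have : (n - 1) * n ≤ n ^ 2 := by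
        have : (n - 1) * n ≤ n * n := Nat.mul_le_mul_right n (Nat.sub_le n 1)
        nlinarith [sq_nonneg n]
      omega
    · have : n ^ 2 ≤ n * (n + 1) := by nlinarith
      have h21 : 2 * 1 - 1 = 1 := by omega
      rw [h21]
      omega
  | succ k hk ih =>
    rw [Tcomb_succ]
    constructor
    · -- lower bound
      have step1 : ∑ j ∈ Finset.range n, 2 * j * (2 ^ k * Nat.choose (n - j) (2 * k))
          ≤ ∑ j ∈ Finset.range n, (2 * j + 1) * Tcomb k (n - j) :=
        Finset.sum_le_sum fun j _ => Nat.mul_le_mul (by omega) (ih (n - j)).1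
      have step2 : ∑ j ∈ Finset.range n, 2 * j * (2 ^ k * Nat.choose (n - j) (2 * k))
          = 2 ^ (k + 1) * ∑ j ∈ Finset.range n, j * Nat.choose (n - j) (2 * k) := by
        rw [Finset.mul_sum]
        exact Finset.sum_congr rfl fun j _ => by ring
      have step3 : ∑ j ∈ Finset.range n, j * Nat.choose (n - j) (2 * k)
          = ∑ l ∈ Finset.range n, (n - 1 - l) * Nat.choose (l + 1) (2 * k) := by
        rw [← Finset.sum_range_reflect (fun j => j * Nat.choose (n - j) (2 * k)) n]
        refine Finset.sum_congr rfl fun l hl => ?_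
        rw [Finset.mem_range] at hl
        have : n - (n - 1 - l) = l + 1 := by omega
        rw [this]
      have step4 := identB (2 * k) n (by omega)
      have step5 : Nat.choose n (2 * (k + 1)) ≤ Nat.choose (n + 1) (2 * k + 2) := by
        have : 2 * (k + 1) = 2 * k + 2 := by omega
        rw [this]
        exact Nat.choose_le_choose _ (by omega)
      calc 2 ^ (k + 1) * Nat.choose n (2 * (k + 1))
          ≤ 2 ^ (k + 1) * Nat.choose (n + 1) (2 * k + 2) := Nat.mul_le_mul_left _ step5
        _ = ∑ j ∈ Finset.range n, 2 * j * (2 ^ k * Nat.choose (n - j) (2 * k)) := by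
            rw [step2, step3, step4]
        _ ≤ _ := step1
    · -- upper bound
      have step1 : ∑ j ∈ Finset.range n, (2 * j + 1) * Tcomb k (n - j)
          ≤ ∑ j ∈ Finset.range n,
              (2 * (j + 1)) * (2 ^ k * Nat.choose (n - j + (2 * k - 1)) (2 * k)) :=
        Finset.sum_le_sum fun j _ => Nat.mul_le_mul (by omega) (ih (n - j)).2
      have step2 : ∑ j ∈ Finset.range n,
              (2 * (j + 1)) * (2 ^ k * Nat.choose (n - j + (2 * k - 1)) (2 * k))
          = 2 ^ (k + 1) * ∑ j ∈ Finset.range n,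
              (j + 1) * Nat.choose (n - j + (2 * k - 1)) (2 * k) := by
        rw [Finset.mul_sum]
        exact Finset.sum_congr rfl fun j _ => by ring
      have step3 : ∑ j ∈ Finset.range n, (j + 1) * Nat.choose (n - j + (2 * k - 1)) (2 * k)
          = ∑ l ∈ Finset.range n, (n - l) * Nat.choose (l + 2 * k) (2 * k) := by
        rw [← Finset.sum_range_reflect
          (fun l => (n - l) * Nat.choose (l + 2 * k) (2 * k)) n]
        refine Finset.sum_congr rfl fun j hj => ?_
        rw [Finset.mem_range] at hj
        have e1 : n - (n - 1 - j) = j + 1 := by omega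
        have e2 : n - 1 - j + 2 * k = n - j + (2 * k - 1) := by omega
        rw [e1, e2]
      have step4 := identA (2 * k) n
      have e3 : n + (2 * (k + 1) - 1) = n + 2 * k + 1 := by omega
      have e4 : 2 * (k + 1) = 2 * k + 2 := by omega
      calc ∑ j ∈ Finset.range n, (2 * j + 1) * Tcomb k (n - j)
          ≤ 2 ^ (k + 1) * ∑ j ∈ Finset.range n,
              (j + 1) * Nat.choose (n - j + (2 * k - 1)) (2 * k) := by rw [← step2]; exact step1
        _ = 2 ^ (k + 1) * Nat.choose (n + 2 * k + 1) (2 * k + 2) := by rw [step3, step4]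
        _ = 2 ^ (k + 1) * Nat.choose (n + (2 * (k + 1) - 1)) (2 * (k + 1)) := by rw [e3, e4]

lemma cast_sub_ge (n m : ℕ) : (n : ℝ) - m ≤ ((n - m : ℕ) : ℝ) := by
  rcases le_total m n with h | h
  · rw [Nat.cast_sub h]
  · have h1 : n - m = 0 := Nat.sub_eq_zero_of_le h
    have h2 : (n : ℝ) ≤ m := Nat.cast_le.mpr h
    rw [h1]
    push_cast
    linarith

lemma factor_tendsto (n : ℕ → ℕ) (x : ℝ)
    (hn : Tendsto (fun M : ℕ => (n M : ℝ) / M) atTop (nhds x)) (c i : ℕ) :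
    Tendsto (fun M : ℕ => ((n M + c - i : ℕ) : ℝ) / M) atTop (nhds x) := by
  have h0 : Tendsto (fun M : ℕ => (1 : ℝ) / M) atTop (nhds 0) :=
    tendsto_one_div_atTop_nhds_zero_nat
  have hlow : Tendsto (fun M : ℕ => (n M : ℝ) / M + ((c : ℝ) - i) * (1 / M)) atTop (nhds x) := by
    have := hn.add (h0.const_mul ((c : ℝ) - i))
    simpa using this
  have hup : Tendsto (fun M : ℕ => (n M : ℝ) / M + (c : ℝ) * (1 / M)) atTop (nhds x) := by
    have := hn.add (h0.const_mul (c : ℝ))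
    simpa using this
  refine tendsto_of_tendsto_of_tendsto_of_le_of_le' hlow hup ?_ ?_
  · filter_upwards [eventually_ge_atTop 1] with M hM
    have hM0 : (0 : ℝ) ≤ (M : ℝ) := Nat.cast_nonneg M
    have hnum : (n M : ℝ) + ((c : ℝ) - i) ≤ ((n M + c - i : ℕ) : ℝ) := by
      have := cast_sub_ge (n M + c) i
      push_cast at this
      linarith
    calc (n M : ℝ) / M + ((c : ℝ) - i) * (1 / M)
        = ((n M : ℝ) + ((c : ℝ) - i)) / M := by ring
      _ ≤ ((n M + c - i : ℕ) : ℝ) / M := by gcongr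
  · filter_upwards [eventually_ge_atTop 1] with M hM
    have hM0 : (0 : ℝ) ≤ (M : ℝ) := Nat.cast_nonneg M
    have hnum : ((n M + c - i : ℕ) : ℝ) ≤ (n M : ℝ) + (c : ℝ) := by
      have h := Nat.cast_le (α := ℝ).mpr (Nat.sub_le (n M + c) i)
      push_cast at h
      linarith
    calc ((n M + c - i : ℕ) : ℝ) / M ≤ ((n M : ℝ) + (c : ℝ)) / M := by gcongr
      _ = (n M : ℝ) / M + (c : ℝ) * (1 / M) := by ring

lemma choose_tendsto (n : ℕ → ℕ) (x : ℝ)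
    (hn : Tendsto (fun M : ℕ => (n M : ℝ) / M) atTop (nhds x)) (c r : ℕ) :
    Tendsto (fun M : ℕ => (Nat.choose (n M + c) r : ℝ) / (M : ℝ) ^ r) atTop
      (nhds (x ^ r / r.factorial)) := by
  have key : ∀ M : ℕ, (Nat.choose (n M + c) r : ℝ) / (M : ℝ) ^ r
      = (1 / (r.factorial : ℝ)) * ∏ i ∈ Finset.range r, ((n M + c - i : ℕ) : ℝ) / M := by
    intro M
    have h1 : ((Nat.descFactorial (n M + c) r : ℕ) : ℝ)
        = (r.factorial : ℝ) * (Nat.choose (n M + c) r : ℝ) := by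
      rw [Nat.descFactorial_eq_factorial_mul_choose]
      push_cast
      ring
    have h2 : ((Nat.descFactorial (n M + c) r : ℕ) : ℝ)
        = ∏ i ∈ Finset.range r, ((n M + c - i : ℕ) : ℝ) := by
      rw [Nat.descFactorial_eq_prod_range, Nat.cast_prod]
    have h3 : ∏ i ∈ Finset.range r, (((n M + c - i : ℕ) : ℝ) / M)
        = (∏ i ∈ Finset.range r, ((n M + c - i : ℕ) : ℝ)) / (M : ℝ) ^ r := by
      rw [Finset.prod_div_distrib, Finset.prod_const, Finset.card_range]
    rw [h3, ← h2, h1]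
    have hfac : (r.factorial : ℝ) ≠ 0 := by positivity
    field_simp
  have hprod : Tendsto (fun M : ℕ => ∏ i ∈ Finset.range r, ((n M + c - i : ℕ) : ℝ) / M)
      atTop (nhds (x ^ r)) := by
    have := tendsto_finset_prod (Finset.range r)
      (fun i _ => factor_tendsto n x hn c i)
    simpa [Finset.prod_const, Finset.card_range] using this
  have := hprod.const_mul (1 / (r.factorial : ℝ))
  rw [funext key]
  have hval : x ^ r / (r.factorial : ℝ) = 1 / (r.factorial : ℝ) * x ^ r := by ring
  rw [hval]
  exact this

lemma LKI_eq (k a b M : ℕ) (h : a ≤ b) :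
    LambdaKInterval k a b M
      = (1 / (2 * k : ℝ)) * (1 / (2 * (M : ℝ) ^ 2)) ^ k
          * ((Tcomb k b : ℝ) - (Tcomb k a : ℝ)) := by
  have hP : ∀ m : ℕ, (∑ t ∈ Finset.Nat.antidiagonalTuple k m, ∏ i, (2 * (t i : ℝ) + 1))
      = (Pcomb k m : ℝ) := by
    intro m
    rw [Pcomb]
    push_cast
    rfl
  have hT : ∀ n : ℕ, (∑ m ∈ Finset.range n, (Pcomb k m : ℝ)) = (Tcomb k n : ℝ) := by
    intro n
    rw [Tcomb]
    push_cast
    rfl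
  unfold LambdaKInterval LambdaK
  simp_rw [hP]
  rw [← Finset.mul_sum, Finset.sum_Ico_eq_sub _ h, hT, hT]

lemma pow_half_eq (k M : ℕ) : (1 / (2 * (M : ℝ) ^ 2)) ^ k
    = 1 / ((2 : ℝ) ^ k * (M : ℝ) ^ (2 * k)) := by
  rw [div_pow, one_pow, mul_pow, pow_mul]

/-- If `a(M)/M → x` and `b(M)/M → y` with `a(M) ≤ b(M)`, then as `M → ∞`,
`Λ_k[a(M), b(M); M] → (y^{2k} - x^{2k})/((2k)(2k)!)`. -/
theorem LambdaKInterval_tendsto (k : ℕ) (hk : 1 ≤ k) (x y : ℝ)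
    (hx : 0 ≤ x) (hxy : x < y) (a b : ℕ → ℕ) (hab : ∀ M, a M ≤ b M)
    (ha : Tendsto (fun M : ℕ => (a M : ℝ) / M) atTop (nhds x))
    (hb : Tendsto (fun M : ℕ => (b M : ℝ) / M) atTop (nhds y)) :
    Tendsto (fun M : ℕ => LambdaKInterval k (a M) (b M) M) atTop
      (nhds ((y ^ (2 * k) - x ^ (2 * k)) / ((2 * k) * Nat.factorial (2 * k)))) := by
  have hk1 : (1 : ℝ) ≤ (k : ℝ) := by exact_mod_cast hk
  have hkpos : (0 : ℝ) < 2 * (k : ℝ) := by linarith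
  have hfac : (0 : ℝ) < (Nat.factorial (2 * k) : ℝ) := by positivity
  have hCb := choose_tendsto b y hb 0 (2 * k)
  have hCa := choose_tendsto a x ha 0 (2 * k)
  have hCb' := choose_tendsto b y hb (2 * k - 1) (2 * k)
  have hCa' := choose_tendsto a x ha (2 * k - 1) (2 * k)
  simp only [Nat.add_zero] at hCb hCa
  have hlo : Tendsto (fun M : ℕ =>
      ((Nat.choose (b M) (2 * k) : ℝ) / (M : ℝ) ^ (2 * k)
        - (Nat.choose (a M + (2 * k - 1)) (2 * k) : ℝ) / (M : ℝ) ^ (2 * k)) / (2 * (k : ℝ)))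
      atTop (nhds ((y ^ (2 * k) / (Nat.factorial (2 * k) : ℝ)
        - x ^ (2 * k) / (Nat.factorial (2 * k) : ℝ)) / (2 * (k : ℝ)))) :=
    (hCb.sub hCa').div_const _
  have hhi : Tendsto (fun M : ℕ =>
      ((Nat.choose (b M + (2 * k - 1)) (2 * k) : ℝ) / (M : ℝ) ^ (2 * k)
        - (Nat.choose (a M) (2 * k) : ℝ) / (M : ℝ) ^ (2 * k)) / (2 * (k : ℝ)))
      atTop (nhds ((y ^ (2 * k) / (Nat.factorial (2 * k) : ℝ)
        - x ^ (2 * k) / (Nat.factorial (2 * k) : ℝ)) / (2 * (k : ℝ)))) :=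
    (hCb'.sub hCa).div_const _
  have hval : ((y ^ (2 * k) - x ^ (2 * k)) / ((2 * k) * Nat.factorial (2 * k)) : ℝ)
      = ((y ^ (2 * k) / (Nat.factorial (2 * k) : ℝ)
        - x ^ (2 * k) / (Nat.factorial (2 * k) : ℝ)) / (2 * (k : ℝ))) := by
    ring
  rw [hval]
  refine tendsto_of_tendsto_of_tendsto_of_le_of_le' hlo hhi ?_ ?_
  · filter_upwards [eventually_ge_atTop 1] with M hM
    have hM0 : (0 : ℝ) < (M : ℝ) := by exact_mod_cast hM
    have hMpow : (0 : ℝ) < (M : ℝ) ^ (2 * k) := by positivity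
    have ht : ((2 : ℝ) ^ k) ≠ 0 := by positivity
    have hD : (0 : ℝ) < 2 * (k : ℝ) * ((2 : ℝ) ^ k * (M : ℝ) ^ (2 * k)) := by positivity
    have s1 := (Tcomb_sandwich k hk (b M)).1
    have s2 := (Tcomb_sandwich k hk (a M)).2
    have c1 : (2 : ℝ) ^ k * (Nat.choose (b M) (2 * k) : ℝ) ≤ (Tcomb k (b M) : ℝ) := by
      exact_mod_cast s1
    have c2 : (Tcomb k (a M) : ℝ)
        ≤ (2 : ℝ) ^ k * (Nat.choose (a M + (2 * k - 1)) (2 * k) : ℝ) := by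
      exact_mod_cast s2
    have e1 : ((Nat.choose (b M) (2 * k) : ℝ) / (M : ℝ) ^ (2 * k)
          - (Nat.choose (a M + (2 * k - 1)) (2 * k) : ℝ) / (M : ℝ) ^ (2 * k)) / (2 * (k : ℝ))
        = ((2 : ℝ) ^ k * (Nat.choose (b M) (2 * k) : ℝ)
            - (2 : ℝ) ^ k * (Nat.choose (a M + (2 * k - 1)) (2 * k) : ℝ))
          / (2 * (k : ℝ) * ((2 : ℝ) ^ k * (M : ℝ) ^ (2 * k))) := by
      rw [div_sub_div_same, div_div, ← mul_sub,
        show 2 * (k : ℝ) * ((2 : ℝ) ^ k * (M : ℝ) ^ (2 * k))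
          = (2 : ℝ) ^ k * ((M : ℝ) ^ (2 * k) * (2 * (k : ℝ))) from by ring,
        mul_div_mul_left _ _ ht]
    have e2 : LambdaKInterval k (a M) (b M) M
        = ((Tcomb k (b M) : ℝ) - (Tcomb k (a M) : ℝ))
          / (2 * (k : ℝ) * ((2 : ℝ) ^ k * (M : ℝ) ^ (2 * k))) := by
      rw [LKI_eq k (a M) (b M) M (hab M), pow_half_eq]
      ring
    rw [e1, e2]
    exact (div_le_div_iff_of_pos_right hD).mpr (sub_le_sub c1 c2)
  · filter_upwards [eventually_ge_atTop 1] with M hM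
    have hM0 : (0 : ℝ) < (M : ℝ) := by exact_mod_cast hM
    have hMpow : (0 : ℝ) < (M : ℝ) ^ (2 * k) := by positivity
    have ht : ((2 : ℝ) ^ k) ≠ 0 := by positivity
    have hD : (0 : ℝ) < 2 * (k : ℝ) * ((2 : ℝ) ^ k * (M : ℝ) ^ (2 * k)) := by positivity
    have s1 := (Tcomb_sandwich k hk (b M)).2
    have s2 := (Tcomb_sandwich k hk (a M)).1
    have c1 : (Tcomb k (b M) : ℝ)
        ≤ (2 : ℝ) ^ k * (Nat.choose (b M + (2 * k - 1)) (2 * k) : ℝ) := by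
      exact_mod_cast s1
    have c2 : (2 : ℝ) ^ k * (Nat.choose (a M) (2 * k) : ℝ) ≤ (Tcomb k (a M) : ℝ) := by
      exact_mod_cast s2
    have e1 : ((Nat.choose (b M + (2 * k - 1)) (2 * k) : ℝ) / (M : ℝ) ^ (2 * k)
          - (Nat.choose (a M) (2 * k) : ℝ) / (M : ℝ) ^ (2 * k)) / (2 * (k : ℝ))
        = ((2 : ℝ) ^ k * (Nat.choose (b M + (2 * k - 1)) (2 * k) : ℝ)
            - (2 : ℝ) ^ k * (Nat.choose (a M) (2 * k) : ℝ))
          / (2 * (k : ℝ) * ((2 : ℝ) ^ k * (M : ℝ) ^ (2 * k))) := by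
      rw [div_sub_div_same, div_div, ← mul_sub,
        show 2 * (k : ℝ) * ((2 : ℝ) ^ k * (M : ℝ) ^ (2 * k))
          = (2 : ℝ) ^ k * ((M : ℝ) ^ (2 * k) * (2 * (k : ℝ))) from by ring,
        mul_div_mul_left _ _ ht]
    have e2 : LambdaKInterval k (a M) (b M) M
        = ((Tcomb k (b M) : ℝ) - (Tcomb k (a M) : ℝ))
          / (2 * (k : ℝ) * ((2 : ℝ) ^ k * (M : ℝ) ^ (2 * k))) := by
      rw [LKI_eq k (a M) (b M) M (hab M), pow_half_eq]
      ring
    rw [e1, e2]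
    exact (div_le_div_iff_of_pos_right hD).mpr (sub_le_sub c1 c2)
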